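/- Let U be an ultrafilter on ℕ containing the cofinite filter, let n be a natural number, and let C ⊆ ℝⁿ (Euclidean n-space) be closed and bounded in the nonstandard sense: (a) every x = [g] ∈ *C is limited, i.e., there is a real r with {i : ‖g i‖ < r} ∈ U; and (b) for every y ∈ ℝⁿ, if some x ∈ *C satisfies x ≈ y, then y ∈ C. Then every x ∈ *C is nearstandard in C: for every x ∈ *C there exists c ∈ C with x ≈ c. -/
import Mathlib


open Filter

/-- The star (nonstandard extension) of a set `A ⊆ X` inside the ultrapower
`*X = (ℕ → X)/U`: `[g] ∈ *A` iff `{i : g i ∈ A} ∈ U`. -/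
def starSet (U : Ultrafilter ℕ) {X : Type*} (A : Set X) :
    Set ((U : Filter ℕ).Germ X) :=
  {x | x.LiftPred (· ∈ A)}

/-- Two points `x = [g]`, `x' = [h]` of the ultrapower `*M` of a metric space `M` are
infinitely close if for every real `ε > 0` the set `{i : dist (g i) (h i) < ε}` is in `U`. -/
def InfClose (U : Ultrafilter ℕ) {M : Type*} [MetricSpace M]
    (x x' : (U : Filter ℕ).Germ M) : Prop :=
  ∀ ε : ℝ, 0 < ε → Filter.Germ.LiftRel (fun a b => dist a b < ε) x x'

/-- If `C ⊆ ℝⁿ` is closed and bounded in the nonstandard sense — (a) every `x = [g] ∈ *C`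
is limited, and (b) every standard point infinitely close to a point of `*C` belongs to
`C` — then every point of `*C` is nearstandard in `C`. -/
theorem closed_bounded_implies_nearstandard (U : Ultrafilter ℕ)
    (hU : Filter.cofinite ≤ (U : Filter ℕ)) (n : ℕ)
    (C : Set (EuclideanSpace ℝ (Fin n)))
    (hbd : ∀ x ∈ starSet U C, ∃ r : ℝ, x.LiftPred (fun a => ‖a‖ < r))
    (hcl : ∀ y : EuclideanSpace ℝ (Fin n),
      (∃ x ∈ starSet U C, InfClose U x (Filter.Germ.const y)) → y ∈ C) :
    ∀ x ∈ starSet U C, ∃ c ∈ C, InfClose U x (Filter.Germ.const c) := by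
  intro x hx
  revert hx
  refine Filter.Germ.inductionOn x fun g => ?_
  intro hx
  obtain ⟨r, hr⟩ := hbd _ hx
  rw [Filter.Germ.liftPred_coe] at hr
  have hmem : ∀ᶠ i in (U : Filter ℕ), g i ∈ Metric.closedBall (0 : EuclideanSpace ℝ (Fin n)) r := by
    filter_upwards [hr] with i hi
    simpa [Metric.mem_closedBall, dist_zero_right] using hi.le
  have hcompact : IsCompact (Metric.closedBall (0 : EuclideanSpace ℝ (Fin n)) r) :=
    isCompact_closedBall _ _
  have hle : (U.map g : Filter (EuclideanSpace ℝ (Fin n))) ≤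
      Filter.principal (Metric.closedBall 0 r) := by
    rwa [Filter.le_principal_iff, Ultrafilter.mem_coe, Ultrafilter.mem_map]
  obtain ⟨c, -, hc⟩ := hcompact.ultrafilter_le_nhds (U.map g) hle
  have hclose : InfClose U (↑g) (Filter.Germ.const c) := by
    intro ε hε
    have : Metric.ball c ε ∈ U.map g := hc (Metric.ball_mem_nhds c hε)
    rw [Ultrafilter.mem_map] at this
    exact Filter.Germ.liftRel_coe.mpr this
  exact ⟨c, hcl c ⟨↑g, hx, hclose⟩, hclose⟩
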